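/- (Noncommutative Poincaré lemma for free algebras, converse direction) Let k be a field of characteristic 0 and F = k⟨x₁,…,xₙ⟩ the free associative algebra. Suppose f₁,…,fₙ ∈ F satisfy Σᵢ [xᵢ, fᵢ] = 0. Then there exists φ ∈ F such that fᵢ = D_{x_i}(φ) for all i, where D_{x_i} is the cyclic derivative. Explicitly, one may take φ = Σᵢ Σ_{r≥1} (1/r) · xᵢ · fᵢ[r−1], where fᵢ[r−1] is the homogeneous component of fᵢ of degree r−1. -/

import Mathlib

/-!
Put `h = ∑ xᵢ fᵢ`. The hypothesis says that also `h = ∑ fᵢ xᵢ`, so comparing the coefficients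
of the words `j :: w` and `w ++ [j]` shows that the coefficients of `h` are invariant under cyclic
rotation of words. On a word `w`, the operator `∑ xᵢ D_{xᵢ}` is the sum of the `|w|` cyclic
rotations of `w`, so on a rotation-invariant element it multiplies the coefficient of every word
`w` by `|w|`. Hence `φ`, whose coefficients are `h_w / |w|`, satisfies `∑ xᵢ D_{xᵢ} φ = h = ∑ xᵢ fᵢ`
(`h` has no constant term), and `fᵢ = D_{xᵢ} φ` because `(aᵢ) ↦ ∑ xᵢ aᵢ` is injective.
-/

open TensorProduct Finset

namespace List

variable {α : Type*}

theorem getElem_cons_drop_append_take (w : List α) (s : ℕ) (hs : s < w.length) :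
    w[s] :: (w.drop (s + 1) ++ w.take s) = w.rotate s := by
  rw [rotate_eq_drop_append_take hs.le, drop_eq_getElem_cons hs, cons_append]

theorem apply_rotate_of_apply_concat {β : Type*} {c : List α → β}
    (hc : ∀ j w, c (w ++ [j]) = c (j :: w)) (w : List α) (s : ℕ) : c (w.rotate s) = c w := by
  induction s with
  | zero => rw [rotate_zero]
  | succ s ih =>
    rw [← rotate_rotate, ← ih]
    rcases w.rotate s with _ | ⟨j, t⟩
    · rfl
    · rw [rotate_cons_succ, rotate_zero, hc]

theorem card_filter_rotate_eq_comm [DecidableEq α] (w v : List α) :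
    #{s ∈ Finset.range w.length | w.rotate s = v} =
      #{t ∈ Finset.range v.length | w = v.rotate t} := by
  by_cases hlen : w.length = v.length
  · have hinv : ∀ s < v.length, (v.length - (v.length - s) % v.length) % v.length = s := by
      intro s hs
      rcases Nat.eq_zero_or_pos s with rfl | hs0
      · simp
      · rw [Nat.mod_eq_of_lt (show v.length - s < v.length by omega), Nat.sub_sub_self hs.le,
          Nat.mod_eq_of_lt hs]
    have hback : ∀ (l : List α) (s : ℕ), s ≤ l.length →
        (l.rotate s).rotate (l.length - s) = l :=
      fun l s hs => by rw [rotate_rotate, Nat.add_sub_cancel' hs, rotate_length]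
    refine card_nbij' (fun s => (v.length - s) % v.length)
      (fun t => (v.length - t) % v.length) ?_ ?_ ?_ ?_ <;>
      simp only [Finset.coe_filter, Finset.mem_range]
    · rintro s ⟨hs, rfl⟩
      refine ⟨Nat.mod_lt _ (by omega), ?_⟩
      rw [rotate_mod, ← hlen, hback w s hs.le]
    · rintro t ⟨ht, rfl⟩
      refine ⟨by rw [hlen]; exact Nat.mod_lt _ (by omega), ?_⟩
      rw [← hlen, rotate_mod, hlen, hback v t ht.le]
    · exact fun s ⟨hs, _⟩ => hinv s (hlen ▸ hs)
    · exact fun t ⟨ht, _⟩ => hinv t ht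
  · rw [Finset.filter_false_of_mem, Finset.filter_false_of_mem]
    · exact fun t _ h => hlen (by rw [h, length_rotate])
    · exact fun s _ h => hlen (by rw [← h, length_rotate])

end List

theorem Module.Basis.exists_repr_eq_mul {ι R M : Type*} [CommSemiring R] [AddCommMonoid M]
    [Module R M] (b : Module.Basis ι R M) (a : ι → R) (x : M) :
    ∃ y, ∀ i, b.repr y i = a i * b.repr x i :=
  ⟨b.repr.symm (Finsupp.onFinset (b.repr x).support (fun i => a i * b.repr x i)
    fun _ hi => Finsupp.mem_support_iff.2 (right_ne_zero_of_mul hi)), fun i => by simp⟩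

section DoubleDerivation

variable {R A : Type*} [CommRing R] [Ring A] [Algebra R A]

/-- Derivations `A → A ⊗ A` for the outer bimodule structure `a (x ⊗ y) b = a x ⊗ y b`. -/
def IsDoubleDerivation (δ : A →ₗ[R] A ⊗[R] A) : Prop :=
  ∀ a b, δ (a * b) = map LinearMap.id (LinearMap.mulRight R b) (δ a) +
    map (LinearMap.mulLeft R a) LinearMap.id (δ b)

theorem IsDoubleDerivation.map_one {δ : A →ₗ[R] A ⊗[R] A} (hδ : IsDoubleDerivation δ) :
    δ 1 = 0 := by
  simpa using hδ 1 1

noncomputable def cyclicDeriv (δ : A →ₗ[R] A ⊗[R] A) : A →ₗ[R] A :=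
  LinearMap.mul' R A ∘ₗ (TensorProduct.comm R A A).toLinearMap ∘ₗ δ

end DoubleDerivation

namespace FreeAlgebra

variable {R X : Type*}

section Basis

variable [CommSemiring R]

variable (R X) in
noncomputable def listBasis : Module.Basis (List X) R (FreeAlgebra R X) :=
  (basisFreeMonoid R X).reindex FreeMonoid.toList

theorem listBasis_apply (w : List X) : listBasis R X w = (w.map (ι R)).prod := by
  simp [listBasis, basisFreeMonoid, equivMonoidAlgebraFreeMonoid]

theorem listBasis_cons (j : X) (w : List X) :
    listBasis R X (j :: w) = ι R j * listBasis R X w := by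
  simp [listBasis_apply]

theorem listBasis_append (u v : List X) :
    listBasis R X (u ++ v) = listBasis R X u * listBasis R X v := by
  simp [listBasis_apply]

theorem listBasis_concat (w : List X) (j : X) :
    listBasis R X (w ++ [j]) = listBasis R X w * ι R j := by
  simp [listBasis_apply]

theorem listBasis_repr_ι_mul (j : X) (g : FreeAlgebra R X) :
    (listBasis R X).repr (ι R j * g) = ((listBasis R X).repr g).mapDomain (List.cons j) := by
  have : (listBasis R X).repr.toLinearMap ∘ₗ LinearMap.mulLeft R (ι R j) =
      Finsupp.lmapDomain R R (List.cons j) ∘ₗ (listBasis R X).repr.toLinearMap :=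
    (listBasis R X).ext fun w => by simp [← listBasis_cons]
  exact LinearMap.congr_fun this g

theorem listBasis_repr_mul_ι (j : X) (g : FreeAlgebra R X) :
    (listBasis R X).repr (g * ι R j) = ((listBasis R X).repr g).mapDomain (· ++ [j]) := by
  have : (listBasis R X).repr.toLinearMap ∘ₗ LinearMap.mulRight R (ι R j) =
      Finsupp.lmapDomain R R (· ++ [j]) ∘ₗ (listBasis R X).repr.toLinearMap :=
    (listBasis R X).ext fun w => by simp [← listBasis_concat]
  exact LinearMap.congr_fun this g

section Fintype

variable [Fintype X]

theorem listBasis_repr_sum_ι_mul_nil (g : X → FreeAlgebra R X) :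
    (listBasis R X).repr (∑ i, ι R i * g i) [] = 0 := by
  simp [listBasis_repr_ι_mul, Finsupp.mapDomain_of_notMem_range]

theorem listBasis_repr_sum_ι_mul_cons (g : X → FreeAlgebra R X) (j : X) (w : List X) :
    (listBasis R X).repr (∑ i, ι R i * g i) (j :: w) = (listBasis R X).repr (g j) w := by
  classical
  simp only [map_sum, Finsupp.finsetSum_apply, listBasis_repr_ι_mul]
  rw [sum_eq_single j (fun i _ hij => Finsupp.mapDomain_of_notMem_range _ _ (by simpa using hij))
    (by simp), Finsupp.mapDomain_apply List.cons_injective]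

theorem listBasis_repr_sum_mul_ι_concat (g : X → FreeAlgebra R X) (j : X) (w : List X) :
    (listBasis R X).repr (∑ i, g i * ι R i) (w ++ [j]) = (listBasis R X).repr (g j) w := by
  classical
  simp only [map_sum, Finsupp.finsetSum_apply, listBasis_repr_mul_ι]
  rw [sum_eq_single j (fun i _ hij => Finsupp.mapDomain_of_notMem_range _ _ (by simpa using hij))
    (by simp), Finsupp.mapDomain_apply (List.append_left_injective [j])]

theorem sum_ι_mul_injective :
    Function.Injective fun g : X → FreeAlgebra R X => ∑ i, ι R i * g i := by
  intro g g' h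
  funext j
  refine (listBasis R X).repr.injective (Finsupp.ext fun w => ?_)
  simpa only [listBasis_repr_sum_ι_mul_cons] using
    congrArg (fun a => (listBasis R X).repr a (j :: w)) h

end Fintype

end Basis

section CyclicDeriv

variable [CommRing R] [DecidableEq X]

theorem _root_.IsDoubleDerivation.apply_listBasis
    {δ : FreeAlgebra R X →ₗ[R] FreeAlgebra R X ⊗[R] FreeAlgebra R X}
    (hδ : IsDoubleDerivation δ) {i : X} (hgen : ∀ j, δ (ι R j) = if i = j then 1 ⊗ₜ 1 else 0)
    (w : List X) :
    δ (listBasis R X w) = ∑ s : Fin w.length,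
      if i = w[s] then listBasis R X (w.take s) ⊗ₜ listBasis R X (w.drop (s + 1)) else 0 := by
  induction w with
  | nil => simp [listBasis_apply, hδ.map_one]
  | cons j t ih =>
    rw [listBasis_cons, hδ, ih, hgen]
    simp only [List.length_cons, Fin.sum_univ_succ]
    congr 1
    · by_cases hij : i = j <;> simp [hij, listBasis_apply]
    · simp [map_sum, apply_ite, listBasis_cons]

theorem cyclicDeriv_listBasis {δ : FreeAlgebra R X →ₗ[R] FreeAlgebra R X ⊗[R] FreeAlgebra R X}
    (hδ : IsDoubleDerivation δ) {i : X} (hgen : ∀ j, δ (ι R j) = if i = j then 1 ⊗ₜ 1 else 0)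
    (w : List X) :
    cyclicDeriv δ (listBasis R X w) = ∑ s : Fin w.length,
      if i = w[s] then listBasis R X (w.drop (s + 1) ++ w.take s) else 0 := by
  simp [cyclicDeriv, hδ.apply_listBasis hgen, apply_ite, listBasis_append]

variable [Fintype X] {δ : X → FreeAlgebra R X →ₗ[R] FreeAlgebra R X ⊗[R] FreeAlgebra R X}

theorem sum_ι_mul_cyclicDeriv_listBasis (hδ : ∀ i, IsDoubleDerivation (δ i))
    (hgen : ∀ i j, δ i (ι R j) = if i = j then 1 ⊗ₜ 1 else 0) (w : List X) :
    ∑ i, ι R i * cyclicDeriv (δ i) (listBasis R X w) =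
      ∑ s ∈ range w.length, listBasis R X (w.rotate s) := by
  simp_rw [cyclicDeriv_listBasis (hδ _) (hgen _), mul_sum, mul_ite, mul_zero]
  rw [sum_comm, ← Fin.sum_univ_eq_sum_range (fun s => listBasis R X (w.rotate s))]
  simp [← listBasis_cons, List.getElem_cons_drop_append_take]

theorem listBasis_repr_sum_ι_mul_cyclicDeriv (hδ : ∀ i, IsDoubleDerivation (δ i))
    (hgen : ∀ i j, δ i (ι R j) = if i = j then 1 ⊗ₜ 1 else 0) (g : FreeAlgebra R X)
    (v : List X) :
    (listBasis R X).repr (∑ i, ι R i * cyclicDeriv (δ i) g) v =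
      ∑ t ∈ range v.length, (listBasis R X).repr g (v.rotate t) := by
  let lhs : FreeAlgebra R X →ₗ[R] R := Finsupp.lapply v ∘ₗ (listBasis R X).repr.toLinearMap ∘ₗ
    ∑ i, LinearMap.mulLeft R (ι R i) ∘ₗ cyclicDeriv (δ i)
  let rhs : FreeAlgebra R X →ₗ[R] R :=
    ∑ t ∈ range v.length, Finsupp.lapply (v.rotate t) ∘ₗ (listBasis R X).repr.toLinearMap
  have : lhs = rhs := (listBasis R X).ext fun w => by
    simp [lhs, rhs, sum_ι_mul_cyclicDeriv_listBasis hδ hgen, Finsupp.single_apply, sum_boole,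
      List.card_filter_rotate_eq_comm w v]
  simpa [lhs, rhs] using LinearMap.congr_fun this g

end CyclicDeriv

end FreeAlgebra

open FreeAlgebra in
/-- (Noncommutative Poincaré lemma for free algebras, converse
direction.)  Let `k` be a field of characteristic `0` and `F = k⟨x₁,…,xₙ⟩`.  Let
`∂/∂xᵢ` be the double derivations determined by `∂xⱼ/∂xᵢ = δᵢⱼ 1⊗1` and the
Leibniz rule for the outer bimodule structure, with cyclic derivatives
`D_{xᵢ} = μ ∘ τ ∘ ∂/∂xᵢ`.  If `f₁,…,fₙ ∈ F` satisfy `∑ᵢ [xᵢ, fᵢ] = 0` then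
there exists `φ ∈ F` with `fᵢ = D_{xᵢ}(φ)` for all `i`. -/
theorem nc_poincare_lemma_free_algebra
    {k : Type*} [Field k] [CharZero k] {n : ℕ}
    (δ : Fin n → (FreeAlgebra k (Fin n) →ₗ[k]
      FreeAlgebra k (Fin n) ⊗[k] FreeAlgebra k (Fin n)))
    (hLeib : ∀ i (a b : FreeAlgebra k (Fin n)), δ i (a * b) =
      TensorProduct.map LinearMap.id (LinearMap.mulRight k b) (δ i a) +
      TensorProduct.map (LinearMap.mulLeft k a) LinearMap.id (δ i b))
    (hgen : ∀ i j, δ i (FreeAlgebra.ι k j) =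
      if i = j then (1 : FreeAlgebra k (Fin n)) ⊗ₜ[k] 1 else 0)
    (f : Fin n → FreeAlgebra k (Fin n))
    (hf : ∑ i : Fin n,
      (FreeAlgebra.ι k i * f i - f i * FreeAlgebra.ι k i) = 0) :
    ∃ φ : FreeAlgebra k (Fin n), ∀ i : Fin n,
      f i = LinearMap.mul' k (FreeAlgebra k (Fin n))
        ((TensorProduct.comm k _ _) (δ i φ)) := by
  set h := ∑ i, ι k i * f i
  have hrot : ∀ w s,
      (listBasis k (Fin n)).repr h (w.rotate s) = (listBasis k (Fin n)).repr h w := by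
    refine List.apply_rotate_of_apply_concat fun j w => ?_
    rw [listBasis_repr_sum_ι_mul_cons, show h = ∑ i, f i * ι k i from
      sub_eq_zero.1 ((sum_sub_distrib _ _).symm.trans hf), listBasis_repr_sum_mul_ι_concat]
  obtain ⟨φ, hφ⟩ := (listBasis k (Fin n)).exists_repr_eq_mul (fun w => (w.length : k)⁻¹) h
  refine ⟨φ, congrFun (sum_ι_mul_injective ((listBasis k (Fin n)).repr.injective
    (Finsupp.ext fun v => ?_)))⟩
  change (listBasis k (Fin n)).repr h v =
    (listBasis k (Fin n)).repr (∑ i, ι k i * cyclicDeriv (δ i) φ) v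
  rw [listBasis_repr_sum_ι_mul_cyclicDeriv hLeib hgen]
  simp_rw [hφ, List.length_rotate, hrot]
  rcases v with _ | ⟨j, u⟩
  · exact listBasis_repr_sum_ι_mul_nil f
  · rw [sum_const, card_range, nsmul_eq_mul, ← mul_assoc,
      mul_inv_cancel₀ (by simp [Nat.cast_add_one_ne_zero]), one_mul]
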